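/- arXiv:0812.0804 — 2 statements merged into one kernel-verified Lean document; each statement's English description precedes it below -/
import Mathlib

section
/- For all n ≥ 1 and all words z, y₁, …, y_n ∈ I, the iterated fusion multiplicity satisfies mult(z; y₁, …, y_n) ≤ dim₁(y₁)·dim₁(y₂)⋯dim₁(y_n). -/
open Filter Topology MeasureTheory

/-- Words in the free monoid on two letters `α = true`, `β = false`. -/
abbrev Word := List Bool

/-- Conjugation: reverse the word and swap the two letters. -/
def wconj (x : Word) : Word := x.reverse.map (fun b => !b)

/-- Fusion multiplicity `m(z; x, y)`: the number of triples `(x₀, w, y₀)` with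
`x = x₀w`, `y = w̄y₀` and `z = x₀y₀`. -/
def fm (x y z : Word) : ℕ :=
  ((Finset.range (x.length + 1)).filter (fun k =>
    wconj (x.drop k) <+: y ∧ z = x.take k ++ y.drop (x.length - k))).card

/-- Maximal alternating blocks of a word. -/
def blocks : Word → List Word
  | [] => []
  | a :: rest =>
    match blocks rest with
    | [] => [[a]]
    | b :: bs => if b.head? = some a then [a] :: b :: bs else (a :: b) :: bs

/-- The quantum integer `[n]_q = (qⁿ - q⁻ⁿ)/(q - q⁻¹)`. -/
noncomputable def qnum (q : ℝ) (n : ℕ) : ℝ := (q ^ n - q⁻¹ ^ n) / (q - q⁻¹)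

/-- Quantum dimension `dim_q(x) = ∏ᵢ [|xᵢ|+1]_q` over the maximal alternating blocks. -/
noncomputable def dimq (q : ℝ) (x : Word) : ℝ :=
  ((blocks x).map (fun b => qnum q (b.length + 1))).prod

/-- Classical dimension `dim₁(x) = ∏ᵢ (|xᵢ|+1)` over the maximal alternating blocks. -/
def dim1 (x : Word) : ℕ := ((blocks x).map (fun b => b.length + 1)).prod
/-- Auxiliary: iterated fusion multiplicity, peeling the *last* factor, i.e. with the
list of factors given in reverse order: `multRev [yₙ, …, y₁] z = mult(z; y₁, …, yₙ)`. -/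
noncomputable def multRev : List Word → Word → ℕ
  | [], _ => 0
  | [y], z => if z = y then 1 else 0
  | y :: y' :: ys, z => ∑ᶠ s : Word, multRev (y' :: ys) s * fm s y z

/-- Iterated fusion multiplicity `mult(z; y₁, …, yₙ)`: equal to the indicator of `z = y₁`
for `n = 1`, and satisfying `mult(z; y₁, …, yₙ) = Σₛ mult(s; y₁, …, yₙ₋₁)·m(z; s, yₙ)`. -/
noncomputable def multIter (ys : List Word) (z : Word) : ℕ := multRev ys.reverse z

/-!
In a fusion `z ⊂ s ⊗ y` the left factor `s` is recovered from `z`, `y` and the length `j` of the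
cancelled word: `s` is the prefix of `z` that precedes `y₀`, followed by the conjugate of the
first `j` letters of `y`. Hence `Σₛ m(z; s, y) ≤ |y| + 1`, and `|y| + 1 ≤ dim₁(y)` because the
block lengths of `y` add up to `|y|`. Peeling off the last factor, induction on `n` gives
`mult(z; y₁, …, yₙ) ≤ dim₁(y₁)⋯dim₁(yₙ₋₁) · Σₛ m(z; s, yₙ) ≤ dim₁(y₁)⋯dim₁(yₙ)`.
-/

lemma length_wconj (x : Word) : (wconj x).length = x.length := by simp [wconj]

lemma wconj_wconj (x : Word) : wconj (wconj x) = x := by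
  simp [wconj, List.map_reverse, Function.comp_def]

lemma sum_length_blocks (x : Word) : ((blocks x).map List.length).sum = x.length := by
  induction x with
  | nil => simp [blocks]
  | cons a rest ih =>
    rw [blocks]
    cases h : blocks rest with
    | nil => simp_all
    | cons b bs =>
      rw [h, List.map_cons, List.sum_cons] at ih
      dsimp only
      split <;> simp <;> omega

lemma List.sum_add_one_le_prod_map_add_one (l : List ℕ) :
    l.sum + 1 ≤ (l.map (· + 1)).prod := by
  induction l with
  | nil => simp
  | cons a l ih =>
    simp only [List.sum_cons, List.map_cons, List.prod_cons]
    have hprod : 1 ≤ (l.map (· + 1)).prod := (Nat.le_add_left 1 _).trans ih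
    nlinarith [Nat.mul_le_mul_left a hprod]

lemma length_add_one_le_dim1 (x : Word) : x.length + 1 ≤ dim1 x := by
  have := List.sum_add_one_le_prod_map_add_one ((blocks x).map List.length)
  rwa [sum_length_blocks, List.map_map] at this

/-- The left factor of a fusion `z ⊂ s ⊗ y` in which the first `j` letters of `y` cancel. -/
def leftFactor (y z : Word) (j : ℕ) : Word :=
  z.take (z.length - (y.length - j)) ++ wconj (y.take j)

lemma eq_leftFactor_of_fusion {s y z : Word} {k : ℕ} (hk : k ≤ s.length)
    (hpre : wconj (s.drop k) <+: y) (hz : z = s.take k ++ y.drop (s.length - k)) :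
    s.length - k ≤ y.length ∧ s = leftFactor y z (s.length - k) := by
  set j := s.length - k
  have hlen : (wconj (s.drop k)).length = j := by rw [length_wconj, List.length_drop]
  have hj : j ≤ y.length := hlen ▸ hpre.length_le
  have hdrop : s.drop k = wconj (y.take j) := by
    obtain ⟨t, rfl⟩ := hpre
    rw [← hlen, List.take_left, wconj_wconj]
  have htake : (s.take k).length = k := by simp [hk]
  have hzlen : z.length - (y.length - j) = k := by
    rw [hz, List.length_append, htake, List.length_drop]
    omega
  refine ⟨hj, ?_⟩
  rw [leftFactor, hzlen, hz, List.take_left' htake, ← hdrop, List.take_append_drop]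

lemma fm_le_card_leftFactor_eq (s y z : Word) :
    fm s y z ≤ ((Finset.range (y.length + 1)).filter (fun j => leftFactor y z j = s)).card := by
  refine Finset.card_le_card_of_injOn (fun k => s.length - k) ?_ ?_
  · intro k hk
    simp only [Finset.coe_filter, Finset.mem_range, Set.mem_ofPred_eq] at hk ⊢
    obtain ⟨hks, hpre, hz⟩ := hk
    obtain ⟨hj, hs⟩ := eq_leftFactor_of_fusion (by omega) hpre hz
    exact ⟨by omega, hs.symm⟩
  · intro k₁ h₁ k₂ h₂ h
    simp only [Finset.coe_filter, Finset.mem_range, Set.mem_ofPred_eq] at h₁ h₂ h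
    omega

lemma mem_image_leftFactor_of_fm_ne_zero {s y z : Word} (h : fm s y z ≠ 0) :
    s ∈ (Finset.range (y.length + 1)).image (leftFactor y z) := by
  obtain ⟨j, hj⟩ := Finset.card_pos.mp
    (Nat.pos_of_ne_zero h |>.trans_le (fm_le_card_leftFactor_eq s y z))
  rw [Finset.mem_filter] at hj
  exact Finset.mem_image.mpr ⟨j, hj⟩

lemma sum_fm_le_length_add_one (y z : Word) :
    ∑ s ∈ (Finset.range (y.length + 1)).image (leftFactor y z), fm s y z ≤ y.length + 1 := by
  calc _ ≤ ∑ s ∈ (Finset.range (y.length + 1)).image (leftFactor y z),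
          ((Finset.range (y.length + 1)).filter (fun j => leftFactor y z j = s)).card :=
        Finset.sum_le_sum fun s _ => fm_le_card_leftFactor_eq s y z
    _ = y.length + 1 := by
      rw [← Finset.card_eq_sum_card_image, Finset.card_range]

lemma multRev_le_prod_dim1 (l : List Word) (z : Word) : multRev l z ≤ (l.map dim1).prod := by
  induction l, z using multRev.induct with
  | case1 => simp [multRev]
  | case2 y => simpa [multRev] using (Nat.le_add_left 1 _).trans (length_add_one_le_dim1 y)
  | case3 y z hzy => simp [multRev, hzy]
  | case4 y y' ys z ih =>
    set T := (Finset.range (y.length + 1)).image (leftFactor y z)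
    set M := ((y' :: ys).map dim1).prod
    have hsupp : Function.support (fun s => multRev (y' :: ys) s * fm s y z) ⊆ T :=
      fun s hs => mem_image_leftFactor_of_fm_ne_zero (right_ne_zero_of_mul hs)
    rw [multRev, finsum_eq_sum_of_support_subset _ hsupp]
    calc ∑ s ∈ T, multRev (y' :: ys) s * fm s y z
        ≤ ∑ s ∈ T, M * fm s y z := Finset.sum_le_sum fun s _ => Nat.mul_le_mul_right _ (ih s)
      _ = M * ∑ s ∈ T, fm s y z := (Finset.mul_sum ..).symm
      _ ≤ M * dim1 y :=
          Nat.mul_le_mul_left _ ((sum_fm_le_length_add_one y z).trans (length_add_one_le_dim1 y))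
      _ = ((y :: y' :: ys).map dim1).prod := by
          rw [List.map_cons, List.prod_cons, mul_comm]

theorem multIter_le_prod_dim1_general (ys : List Word) (z : Word) :
    multIter ys z ≤ (ys.map dim1).prod := by
  rw [multIter, ← List.prod_reverse, ← List.map_reverse]
  exact multRev_le_prod_dim1 _ _

/-- For `n ≥ 1` and words `z, y₁, …, yₙ`, the iterated fusion multiplicity
satisfies `mult(z; y₁, …, yₙ) ≤ dim₁(y₁)·dim₁(y₂)⋯dim₁(yₙ)`. -/
theorem multIter_le_prod_dim1 (ys : List Word) (hys : ys ≠ []) (z : Word) :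
    multIter ys z ≤ (ys.map dim1).prod :=
  multIter_le_prod_dim1_general ys z
end

section
/- For all x, y ∈ I and every infinite word w ∈ ∂I, the sequence (dim_q(x[w]_n)/dim_q(y[w]_n))_{n ∈ ℕ} converges to a strictly positive real number. -/
open Filter Topology MeasureTheory

/-- The word `[w]_n` formed by the first `n` letters of an infinite word `w ∈ ∂I`. -/
def bprefix (w : ℕ → Bool) (n : ℕ) : Word := (List.range n).map w

/-- `D_w(x, y) = lim_n dim_q(x[w]_n)/dim_q(y[w]_n)` for `x, y ∈ I` and `w ∈ ∂I`. -/
noncomputable def Dw (q : ℝ) (x y : Word) (w : ℕ → Bool) : ℝ :=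
  limUnder atTop (fun n => dimq q (x ++ bprefix w n) / dimq q (y ++ bprefix w n))

/-- Concatenation of a finite word with an infinite word. -/
def bcat (z : Word) (u : ℕ → Bool) : ℕ → Bool :=
  fun n => if n < z.length then z.getD n false else u (n - z.length)

/-- The strictly alternating infinite word starting with the letter `a`. -/
def walt (a : Bool) : ℕ → Bool := fun n => if n % 2 = 0 then a else !a

/-- `(x|w)`: the length of the longest common prefix of a finite word `x` and an
infinite word `w`. -/
def cpb : Word → (ℕ → Bool) → ℕ
  | [], _ => 0
  | a :: xs, w => if a = w 0 then cpb xs (fun n => w (n + 1)) + 1 else 0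

/-! `dim_q` is multiplicative over the maximal alternating blocks, and appending letters to a
word only touches its last block. If `w` repeats a letter, say `w m = w (m + 1)`, the blocks of
`x[w]_n` split at that seam for `n > m + 1`, so `dim_q(x[w]_n) = dim_q(x[w]_{m+1}) · s_n` with
`s_n = dim_q(w_{m+1} ⋯ w_{n-1})` independent of `x`. If `w` alternates, the last block of
`x[w]_n` is `x₂[w]_n` for a fixed suffix `x₂` of `x`, so `dim_q(x[w]_n) = K_x [n + c_x]_q`, and
`[n + c]_q ~ q^{-n-c} / (q⁻¹ - q)`; here `s_n = q^{-n}`. In both cases the ratio tends to the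
quotient of the two positive limits of `dim_q(x[w]_n) / s_n` and `dim_q(y[w]_n) / s_n`. -/

lemma blocks_cons (a : Bool) (v : Word) : blocks (a :: v) =
    match blocks v with
    | [] => [[a]]
    | b :: bs => if b.head? = some a then [a] :: b :: bs else (a :: b) :: bs := rfl

lemma exists_blocks_cons (a : Bool) (v : Word) :
    ∃ b bs, blocks (a :: v) = b :: bs ∧ b.head? = some a := by
  rw [blocks_cons]
  rcases blocks v with _ | ⟨b, bs⟩
  · exact ⟨[a], [], rfl, rfl⟩
  · by_cases h : b.head? = some a
    · exact ⟨[a], b :: bs, by simp [h], rfl⟩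
    · exact ⟨a :: b, bs, by simp [h], rfl⟩

lemma blocks_append_of_getLast?_eq_head? {s t : Word} (hs : s ≠ [])
    (h : s.getLast? = t.head?) : blocks (s ++ t) = blocks s ++ blocks t := by
  induction s with
  | nil => exact absurd rfl hs
  | cons a s ih =>
    rcases s with _ | ⟨c, s⟩
    · obtain ⟨t, rfl⟩ : ∃ t', t = a :: t' := by
        rcases t with _ | ⟨b, t⟩ <;> simp_all
      obtain ⟨b, bs, hb, hbh⟩ := exists_blocks_cons a t
      rw [List.singleton_append, blocks_cons, hb]
      simp [hbh, blocks]
    · obtain ⟨b, bs, hb, -⟩ := exists_blocks_cons c s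
      have ih' : blocks (c :: s ++ t) = b :: (bs ++ blocks t) := by
        rw [ih (List.cons_ne_nil c s) (by simpa using h), hb, List.cons_append]
      rw [List.cons_append, blocks_cons, ih', blocks_cons (v := c :: s), hb]
      dsimp only
      split_ifs <;> simp

lemma dimq_append_of_getLast?_eq_head? (q : ℝ) {s t : Word} (hs : s ≠ [])
    (h : s.getLast? = t.head?) : dimq q (s ++ t) = dimq q s * dimq q t := by
  rw [dimq, blocks_append_of_getLast?_eq_head? hs h, List.map_append, List.prod_append,
    dimq, dimq]

lemma blocks_eq_singleton_of_isChain_ne {v : Word} (hv : v ≠ []) (hc : v.IsChain (· ≠ ·)) :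
    blocks v = [v] := by
  induction v with
  | nil => exact absurd rfl hv
  | cons a v ih =>
    rcases v with _ | ⟨b, v⟩
    · rfl
    · obtain ⟨hab, hc⟩ := List.isChain_cons_cons.mp hc
      rw [blocks_cons, ih (List.cons_ne_nil b v) hc]
      simp [Ne.symm hab]

lemma exists_blocks_append_of_isChain_ne (x : Word) (a : Bool) :
    ∃ B x₂, ∀ v : Word, v.head? = some a → v.IsChain (· ≠ ·) →
      blocks (x ++ v) = B ++ [x₂ ++ v] := by
  induction x with
  | nil =>
    refine ⟨[], [], fun v hv hc => ?_⟩
    exact blocks_eq_singleton_of_isChain_ne (by rintro rfl; simp at hv) hc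
  | cons c x ih =>
    obtain ⟨B, x₂, hB⟩ := ih
    rcases B with _ | ⟨b, B⟩
    · by_cases hc : (x₂ ++ [a]).head? = some c
      · refine ⟨[[c]], x₂, fun v hv hch => ?_⟩
        rw [List.cons_append, blocks_cons, hB v hv hch]
        simp_all [List.head?_append]
      · refine ⟨[], c :: x₂, fun v hv hch => ?_⟩
        rw [List.cons_append, blocks_cons, hB v hv hch]
        simp_all [List.head?_append]
    · by_cases hc : b.head? = some c
      · refine ⟨[c] :: b :: B, x₂, fun v hv hch => ?_⟩
        rw [List.cons_append, blocks_cons, hB v hv hch]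
        simp [hc]
      · refine ⟨(c :: b) :: B, x₂, fun v hv hch => ?_⟩
        rw [List.cons_append, blocks_cons, hB v hv hch]
        simp [hc]

lemma qnum_pos {q : ℝ} (hq0 : 0 < q) (hq1 : q < 1) {n : ℕ} (hn : n ≠ 0) : 0 < qnum q n := by
  have hq : q < q⁻¹ := hq1.trans ((one_lt_inv₀ hq0).mpr hq1)
  exact div_pos_of_neg_of_neg (sub_neg.mpr (pow_lt_pow_left₀ hq hq0.le hn)) (sub_neg.mpr hq)

lemma prod_qnum_length_add_one_pos {q : ℝ} (hq0 : 0 < q) (hq1 : q < 1) (B : List Word) :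
    0 < (B.map fun b => qnum q (b.length + 1)).prod :=
  List.prod_pos fun _ hr => by
    obtain ⟨b, -, rfl⟩ := List.mem_map.mp hr
    exact qnum_pos hq0 hq1 b.length.succ_ne_zero

lemma dimq_pos {q : ℝ} (hq0 : 0 < q) (hq1 : q < 1) (x : Word) : 0 < dimq q x :=
  prod_qnum_length_add_one_pos hq0 hq1 (blocks x)

lemma tendsto_pow_mul_qnum_add {q : ℝ} (hq0 : 0 < q) (hq1 : q < 1) (c : ℕ) :
    Tendsto (fun n => q ^ n * qnum q (n + c)) atTop (𝓝 (q⁻¹ ^ c / (q⁻¹ - q))) := by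
  have hq : q⁻¹ - q ≠ 0 := (sub_pos.mpr (hq1.trans ((one_lt_inv₀ hq0).mpr hq1))).ne'
  have hmul : ∀ n : ℕ,
      q ^ n * qnum q (n + c) = (q⁻¹ ^ c - q ^ c * (q ^ 2) ^ n) / (q⁻¹ - q) := by
    intro n
    have hinv : q ^ n * q⁻¹ ^ n = 1 := by rw [← mul_pow, mul_inv_cancel₀ hq0.ne', one_pow]
    rw [qnum, ← neg_div_neg_eq, neg_sub, neg_sub, mul_div_assoc']
    congr 1
    linear_combination q⁻¹ ^ c * hinv
  have hsq : Tendsto (fun n : ℕ => (q ^ 2) ^ n) atTop (𝓝 0) :=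
    tendsto_pow_atTop_nhds_zero_of_lt_one (by positivity) (pow_lt_one₀ hq0.le hq1 two_ne_zero)
  simpa [hmul] using ((hsq.const_mul (q ^ c)).const_sub (q⁻¹ ^ c)).div_const (q⁻¹ - q)

lemma exists_dimq_append_of_isChain_ne {q : ℝ} (hq0 : 0 < q) (hq1 : q < 1)
    (x : Word) (a : Bool) :
    ∃ K > 0, ∃ c : ℕ, ∀ v : Word, v.head? = some a → v.IsChain (· ≠ ·) →
      dimq q (x ++ v) = K * qnum q (v.length + c) := by
  obtain ⟨B, x₂, hB⟩ := exists_blocks_append_of_isChain_ne x a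
  refine ⟨_, prod_qnum_length_add_one_pos hq0 hq1 B, x₂.length + 1, fun v hv hc => ?_⟩
  rw [dimq, hB v hv hc, List.map_append, List.prod_append, List.map_singleton,
    List.prod_singleton, List.length_append]
  ring_nf

section bprefix

variable (w : ℕ → Bool)

@[simp]
lemma bprefix_length (n : ℕ) : (bprefix w n).length = n := by
  simp [bprefix]

lemma bprefix_head? {n : ℕ} (hn : n ≠ 0) : (bprefix w n).head? = some (w 0) := by
  obtain ⟨n, rfl⟩ := Nat.exists_eq_succ_of_ne_zero hn
  simp [bprefix, List.range_succ_eq_map]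

lemma bprefix_succ_getLast? (n : ℕ) : (bprefix w (n + 1)).getLast? = some (w n) := by
  simp [bprefix, List.range_succ]

lemma bprefix_add (m k : ℕ) :
    bprefix w (m + k) = bprefix w m ++ bprefix (fun i => w (m + i)) k := by
  simp [bprefix, List.range_add, Function.comp_def]

lemma bprefix_isChain_ne (hw : ∀ k, w k ≠ w (k + 1)) (n : ℕ) :
    (bprefix w n).IsChain (· ≠ ·) :=
  (List.isChain_map w).2 ((List.isChain_range _ n).2 fun m _ => hw m)

end bprefix

structure IsDimqScale (q : ℝ) (w : ℕ → Bool) (s : ℕ → ℝ) : Prop where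
  pos : ∀ n, 0 < s n
  exists_tendsto : ∀ x : Word, ∃ L > 0,
    Tendsto (fun n => dimq q (x ++ bprefix w n) / s n) atTop (𝓝 L)

lemma IsDimqScale.exists_tendsto_div {q : ℝ} {w : ℕ → Bool} {s : ℕ → ℝ}
    (hs : IsDimqScale q w s) (x y : Word) : ∃ L > 0,
    Tendsto (fun n => dimq q (x ++ bprefix w n) / dimq q (y ++ bprefix w n)) atTop (𝓝 L) := by
  obtain ⟨Lx, hLx, hx⟩ := hs.exists_tendsto x
  obtain ⟨Ly, hLy, hy⟩ := hs.exists_tendsto y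
  exact ⟨Lx / Ly, div_pos hLx hLy,
    (hx.div hy hLy.ne').congr fun n => div_div_div_cancel_right₀ (hs.pos n).ne' _ _⟩

lemma isDimqScale_of_forall_ne {q : ℝ} (hq0 : 0 < q) (hq1 : q < 1) {w : ℕ → Bool}
    (hw : ∀ k, w k ≠ w (k + 1)) : IsDimqScale q w fun n => q⁻¹ ^ n := by
  refine ⟨fun n => by positivity, fun x => ?_⟩
  obtain ⟨K, hK, c, hx⟩ := exists_dimq_append_of_isChain_ne hq0 hq1 x (w 0)
  have hq : 0 < q⁻¹ - q := sub_pos.mpr (hq1.trans ((one_lt_inv₀ hq0).mpr hq1))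
  refine ⟨K * (q⁻¹ ^ c / (q⁻¹ - q)), by positivity,
    ((tendsto_pow_mul_qnum_add hq0 hq1 c).const_mul K).congr' ?_⟩
  filter_upwards [eventually_ne_atTop 0] with n hn
  rw [hx _ (bprefix_head? w hn) (bprefix_isChain_ne w hw n), bprefix_length, inv_pow,
    div_inv_eq_mul]
  ring

lemma dimq_append_bprefix_of_eq (q : ℝ) {w : ℕ → Bool} {m : ℕ} (hm : w m = w (m + 1))
    (z : Word) {k : ℕ} (hk : k ≠ 0) :
    dimq q (z ++ bprefix w (m + 1 + k)) =
      dimq q (z ++ bprefix w (m + 1)) * dimq q (bprefix (fun i => w (m + 1 + i)) k) := by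
  have hne : bprefix w (m + 1) ≠ [] := List.ne_nil_of_length_pos (by simp)
  rw [bprefix_add, ← List.append_assoc]
  refine dimq_append_of_getLast?_eq_head? q (List.append_ne_nil_of_right_ne_nil z hne) ?_
  rw [List.getLast?_append_of_ne_nil z hne, bprefix_succ_getLast?, bprefix_head? _ hk, hm]

lemma isDimqScale_of_eq {q : ℝ} (hq0 : 0 < q) (hq1 : q < 1) {w : ℕ → Bool} {m : ℕ}
    (hm : w m = w (m + 1)) :
    IsDimqScale q w fun n => dimq q (bprefix (fun i => w (m + 1 + i)) (n - (m + 1))) := by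
  refine ⟨fun n => dimq_pos hq0 hq1 _, fun x => ⟨_, dimq_pos hq0 hq1 (x ++ bprefix w (m + 1)),
    tendsto_const_nhds.congr' ?_⟩⟩
  filter_upwards [eventually_gt_atTop (m + 1)] with n hn
  obtain ⟨k, rfl⟩ := Nat.exists_eq_add_of_lt hn
  rw [show m + 1 + k + 1 = m + 1 + (k + 1) by ring,
    dimq_append_bprefix_of_eq q hm x k.succ_ne_zero, Nat.add_sub_cancel_left,
    mul_div_cancel_right₀ _ (dimq_pos hq0 hq1 _).ne']

lemma exists_isDimqScale {q : ℝ} (hq0 : 0 < q) (hq1 : q < 1) (w : ℕ → Bool) :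
    ∃ s, IsDimqScale q w s := by
  by_cases hw : ∀ k, w k ≠ w (k + 1)
  · exact ⟨_, isDimqScale_of_forall_ne hq0 hq1 hw⟩
  · obtain ⟨m, hm⟩ := not_forall_not.mp hw
    exact ⟨_, isDimqScale_of_eq hq0 hq1 hm⟩

/-- For all `x, y ∈ I` and every infinite word `w ∈ ∂I`, the sequence
`dim_q(x[w]_n)/dim_q(y[w]_n)` converges to a strictly positive real number. -/
theorem dimq_ratio_tendsto (q : ℝ) (hq0 : 0 < q) (hq1 : q < 1)
    (x y : Word) (w : ℕ → Bool) :
    ∃ L : ℝ, 0 < L ∧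
      Tendsto (fun n => dimq q (x ++ bprefix w n) / dimq q (y ++ bprefix w n))
        atTop (𝓝 L) := by
  obtain ⟨s, hs⟩ := exists_isDimqScale hq0 hq1 w
  exact hs.exists_tendsto_div x y
end
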